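/- Let A, B : I^n → I be standardized functions with A ≤ B and fix an integer k with 1 ≤ k ≤ n. Suppose at least one of A and B satisfies Condition S with some countable set S ⊆ [0,1], and that L_k^{(A,B)}(DU) ≥ 0 for all DU ∈ R_k(I^n). Then the following are equivalent: (i) P⁻_k^{(A,B)}(x) ≥ B(x) − A(x) for all x ∈ I^n; (ii) for all x ∈ I^n, B(x) = sup{C(x) : C : I^n → I, A ≤ C ≤ B, C a k-increasing standardized function}. -/

import Mathlib

open scoped Classical BigOperators

namespace KIncr

/-- Points of the ambient space `ℝ^n`. -/
abbrev Pt (n : ℕ) := Fin n → ℝ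

/-- Membership in the unit cube `I^n = [0,1]^n`. -/
def inCube {n : ℕ} (x : Pt n) : Prop := ∀ i, x i ∈ Set.Icc (0:ℝ) 1

/-- The unit cube as a set. -/
def cubeSet (n : ℕ) : Set (Pt n) := {x | inCube x}

/-- Vertices of the unit cube `I^n`. -/
def isCubeVertex {n : ℕ} (x : Pt n) : Prop := ∀ i, x i = 0 ∨ x i = 1

/-- A (formal) box, given by its lower-left and upper-right corners. -/
structure Box (n : ℕ) where
  lo : Pt n
  hi : Pt n

/-- `R` is a `k`-box in `I^n`: exactly `k` coordinates are nondegenerate. -/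
def Box.IsKBox {n : ℕ} (k : ℕ) (R : Box n) : Prop :=
  inCube R.lo ∧ inCube R.hi ∧ (∀ i, R.lo i ≤ R.hi i) ∧
    (Finset.univ.filter (fun i => R.lo i < R.hi i)).card = k

/-- `v` is a vertex of the box `R`. -/
def Box.IsVertex {n : ℕ} (R : Box n) (v : Pt n) : Prop :=
  ∀ i, v i = R.lo i ∨ v i = R.hi i

/-- The (finite) set of vertices of a box. -/
noncomputable def Box.vertices {n : ℕ} (R : Box n) : Finset (Pt n) :=
  Finset.image (fun ε : Fin n → Bool => fun i => if ε i then R.hi i else R.lo i)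
    Finset.univ

/-- The sign `(-1)^(m-(n-k))` of a vertex `v` of a `k`-box, where
`m = #{i : v i = lo i}`;  since `m ≥ n - k`, this equals `(-1)^(m+(n-k))`. -/
noncomputable def Box.sign {n : ℕ} (k : ℕ) (R : Box n) (v : Pt n) : ℤ :=
  (-1) ^ ((Finset.univ.filter (fun i => v i = R.lo i)).card + (n - k))

/-- The multiplicity `m_R(u)` of a point `u` with respect to a `k`-box `R`. -/
noncomputable def Box.mult {n : ℕ} (k : ℕ) (R : Box n) (u : Pt n) : ℤ :=
  if R.IsVertex u then R.sign k u else 0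

/-- `V_{A,k}(R) = ∑_{v ∈ ver R} sign_R(v) · A(v)`. -/
noncomputable def Vvol {n : ℕ} (k : ℕ) (A : Pt n → ℝ) (R : Box n) : ℝ :=
  ∑ v ∈ R.vertices, (R.sign k v : ℝ) * A v

/-- A function is `k`-increasing on `D` if `V_{A,k}(R) ≥ 0` for every `k`-box
with all vertices in `D`. -/
def KIncreasingOn {n : ℕ} (k : ℕ) (D : Set (Pt n)) (A : Pt n → ℝ) : Prop :=
  ∀ R : Box n, R.IsKBox k → (∀ v ∈ R.vertices, v ∈ D) → 0 ≤ Vvol k A R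

/-- The multiplicity `m_DU(u)` of a point with respect to a formal (multiset)
disjoint union of `k`-boxes. -/
noncomputable def multDU {n : ℕ} (k : ℕ) (DU : Multiset (Box n)) (u : Pt n) : ℤ :=
  (DU.map (fun R => R.mult k u)).sum

/-- `DU ∈ R_k(D)`: every box of the multiset `DU` is a `k`-box with all its
vertices in `D`. -/
def memRk {n : ℕ} (k : ℕ) (D : Set (Pt n)) (DU : Multiset (Box n)) : Prop :=
  ∀ R ∈ DU, R.IsKBox k ∧ ∀ v ∈ R.vertices, v ∈ D

/-- `L_k^{(A,B)}(DU) = ∑_{m_DU(u)>0} m_DU(u)·B(u) + ∑_{m_DU(u)<0} m_DU(u)·A(u)`. -/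
noncomputable def Lk {n : ℕ} (k : ℕ) (A B : Pt n → ℝ) (DU : Multiset (Box n)) : ℝ :=
  ∑ u ∈ DU.toFinset.biUnion Box.vertices,
    (if 0 < multDU k DU u then (multDU k DU u : ℝ) * B u
     else if multDU k DU u < 0 then (multDU k DU u : ℝ) * A u else 0)

/-- `P⁻_{k,D}^{(A,B)}(x)`, with the Mathlib convention `sInf ∅ = 0`. -/
noncomputable def Pneg {n : ℕ} (k : ℕ) (D : Set (Pt n)) (A B : Pt n → ℝ) (x : Pt n) : ℝ :=
  sInf {r : ℝ | ∃ DU : Multiset (Box n), memRk k D DU ∧ multDU k DU x < 0 ∧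
    r = Lk k A B DU / |(multDU k DU x : ℝ)|}

/-- `P⁺_{k,D}^{(A,B)}(x)`, with the Mathlib convention `sInf ∅ = 0`. -/
noncomputable def Ppos {n : ℕ} (k : ℕ) (D : Set (Pt n)) (A B : Pt n → ℝ) (x : Pt n) : ℝ :=
  sInf {r : ℝ | ∃ DU : Multiset (Box n), memRk k D DU ∧ 0 < multDU k DU x ∧
    r = Lk k A B DU / |(multDU k DU x : ℝ)|}

/-- `γ_{k,D}^{(A,B)}(x) = min {P⁻_{k,D}^{(A,B)}(x), B(x) - A(x)}`. -/
noncomputable def gammaK {n : ℕ} (k : ℕ) (D : Set (Pt n)) (A B : Pt n → ℝ) (x : Pt n) : ℝ :=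
  min (Pneg k D A B x) (B x - A x)

/-- `δ_{k,D}^{(A,B)}(x) = min {P⁺_{k,D}^{(A,B)}(x), B(x) - A(x)}`. -/
noncomputable def deltaK {n : ℕ} (k : ℕ) (D : Set (Pt n)) (A B : Pt n → ℝ) (x : Pt n) : ℝ :=
  min (Ppos k D A B x) (B x - A x)

/-- A dense countably infinite mesh `D = ∏ δᵢ` in `I^n`. -/
def IsMesh {n : ℕ} (D : Set (Pt n)) : Prop :=
  ∃ δ : Fin n → Set ℝ,
    (∀ i, δ i ⊆ Set.Icc (0:ℝ) 1 ∧ (δ i).Countable ∧ (δ i).Infinite ∧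
      Set.Icc (0:ℝ) 1 ⊆ closure (δ i) ∧ (0:ℝ) ∈ δ i ∧ (1:ℝ) ∈ δ i) ∧
    D = {x : Pt n | ∀ i, x i ∈ δ i}

/-- `A` is grounded: it vanishes whenever some coordinate is `0`. -/
def Grounded {n : ℕ} (A : Pt n → ℝ) : Prop :=
  ∀ x : Pt n, inCube x → (∃ i, x i = 0) → A x = 0

/-- `A` is 1-increasing (increasing in each variable). -/
def OneIncreasing {n : ℕ} (A : Pt n → ℝ) : Prop :=
  ∀ x y : Pt n, inCube x → inCube y → (∀ i, x i ≤ y i) → A x ≤ A y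

/-- `A` has uniform marginals. -/
def UniformMarginals {n : ℕ} (A : Pt n → ℝ) : Prop :=
  ∀ i : Fin n, ∀ t ∈ Set.Icc (0:ℝ) 1, A (Function.update (fun _ => (1:ℝ)) i t) = t

/-- `A` is a standardized function. -/
def Standardized {n : ℕ} (A : Pt n → ℝ) : Prop :=
  Grounded A ∧ OneIncreasing A ∧ A (fun _ => (1:ℝ)) = 1

/-- `A` is a semicopula. -/
def Semicopula {n : ℕ} (A : Pt n → ℝ) : Prop :=
  Grounded A ∧ OneIncreasing A ∧ UniformMarginals A

/-- `A` maps the unit cube into `I = [0,1]`. -/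
def MapsToI {n : ℕ} (A : Pt n → ℝ) : Prop :=
  ∀ x : Pt n, inCube x → A x ∈ Set.Icc (0:ℝ) 1

/-- Condition S: all discontinuities of all sections of `A` lie in the
countable set `S`. -/
def CondS {n : ℕ} (A : Pt n → ℝ) (S : Set ℝ) : Prop :=
  ∀ u : Pt n, inCube u → ∀ i : Fin n, ∀ t ∈ Set.Icc (0:ℝ) 1, t ∉ S →
    ContinuousWithinAt (fun s => A (Function.update u i s)) (Set.Icc (0:ℝ) 1) t

/-- A quasi-copula: a semicopula that is 1-Lipschitz w.r.t. the ℓ¹-norm. -/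
def QuasiCopula {n : ℕ} (A : Pt n → ℝ) : Prop :=
  Semicopula A ∧ ∀ x y : Pt n, inCube x → inCube y → |A x - A y| ≤ ∑ i, |x i - y i|

end KIncr

/-! If `C` is `k`-increasing with `A ≤ C ≤ B`, then `∑ᵤ m_DU(u) C(u)` is a sum of `C`-volumes of
`k`-boxes, hence nonnegative; bounding it termwise by `A` and `B`, except by `C(x)` at a point `x`
with `m_DU(x) < 0`, gives `|m_DU(x)| (C(x) - A(x)) ≤ L_k^{(A,B)}(DU)`, which is (ii) ⇒ (i).

Conversely, (i) says exactly that `L_k` stays nonnegative when `A` is raised to `B` at a single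
point `x`, so it suffices to show that `L_k^{(A,B)} ≥ 0` produces a `k`-increasing `C` between `A`
and `B`. For finitely many boxes this is a separation argument in `ℝ^G`: by homogeneity and
continuity, nonnegativity of `L_k` on integer combinations of boxes extends to nonnegative real
weights, which is the dual condition for the box-constrained linear system. Compactness of
`∏ᵤ [A(u), B(u)]` passes to all boxes at once. Such a `C` is grounded because `0 ≤ A ≤ C ≤ B`, and
a grounded `k`-increasing function is increasing in each variable, since a suitable `k`-box with
`k - 1` sides reaching a zero face has volume `C(v) - C(u)`. -/

open Function Filter Topology

theorem exists_mem_forall_nonneg_of_isCompact {E ι : Type*} [AddCommGroup E] [Module ℝ E]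
    [TopologicalSpace E] [Fintype ι] {K : Set E} (hKc : IsCompact K) (hKconv : Convex ℝ K)
    (φ : ι → E →L[ℝ] ℝ) (h : ∀ w : ι → ℝ, 0 ≤ w → ∃ c ∈ K, 0 ≤ ∑ i, w i * φ i c) :
    ∃ c ∈ K, ∀ i, 0 ≤ φ i c := by
  classical
  set T : E →L[ℝ] (ι → ℝ) := ContinuousLinearMap.pi φ
  by_contra! hneg
  have hdisj : Disjoint (T '' K) (Set.univ.pi fun _ => Set.Ici 0) := by
    refine Set.disjoint_left.2 ?_
    rintro _ ⟨c, hc, rfl⟩ hmem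
    obtain ⟨i, hi⟩ := hneg c hc
    exact hi.not_ge (hmem i (Set.mem_univ i))
  obtain ⟨f, s, t, hK, hst, hP⟩ := geometric_hahn_banach_compact_closed
    (hKconv.linear_image T.toLinearMap) (hKc.image T.continuous)
    (convex_pi fun _ _ => convex_Ici 0) (isClosed_set_pi fun _ _ => isClosed_Ici) hdisj
  set e : ι → ι → ℝ := fun i j => if i = j then 1 else 0
  have he : ∀ i, e i ∈ Set.univ.pi fun _ => Set.Ici 0 := fun i j _ => by
    by_cases h : i = j <;> simp [e, h]
  -- the separating functional is `z ↦ ∑ i, f (e i) * z i`, with nonnegative weights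
  have ht : t < 0 := by simpa using hP 0 (fun _ _ => Set.self_mem_Ici)
  have hw : 0 ≤ fun i => f (e i) := by
    intro i
    by_contra! hi
    have := hP ((t / f (e i)) • e i) fun j _ => mul_nonneg
      (div_pos_of_neg_of_neg ht hi).le (he i j (Set.mem_univ j))
    rw [map_smul, smul_eq_mul, div_mul_cancel₀ _ hi.ne] at this
    exact this.false
  obtain ⟨c, hc, hpos⟩ := h _ hw
  have := hK (T c) ⟨c, hc, rfl⟩
  rw [show f (T c) = _ from f.toLinearMap.pi_apply_eq_sum_univ (T c)] at this
  simp only [ContinuousLinearMap.coe_coe, ContinuousLinearMap.pi_apply, smul_eq_mul, T] at this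
  simp only [mul_comm (f _)] at hpos
  linarith

namespace KIncr

variable {n k : ℕ}

theorem Box.mem_vertices_iff {R : Box n} {v : Pt n} : v ∈ R.vertices ↔ R.IsVertex v := by
  simp only [Box.vertices, Finset.mem_image, Finset.mem_univ, true_and]
  constructor
  · rintro ⟨ε, rfl⟩ i
    cases h : ε i <;> simp [h]
  · intro hv
    refine ⟨fun i => decide (v i = R.hi i), funext fun i => ?_⟩
    by_cases h : v i = R.hi i
    · simp [h]
    · simpa [h] using ((hv i).resolve_right h).symm

theorem Box.mult_of_mem {R : Box n} {v : Pt n} (h : v ∈ R.vertices) :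
    R.mult k v = R.sign k v :=
  if_pos (Box.mem_vertices_iff.1 h)

theorem Box.mult_of_notMem {R : Box n} {v : Pt n} (h : v ∉ R.vertices) : R.mult k v = 0 :=
  if_neg (mt Box.mem_vertices_iff.2 h)

theorem Box.IsKBox.inCube_of_mem_vertices {R : Box n} (hR : R.IsKBox k) {v : Pt n}
    (hv : v ∈ R.vertices) : inCube v := fun i => by
  rcases Box.mem_vertices_iff.1 hv i with h | h <;> rw [h]
  exacts [hR.1 i, hR.2.1 i]

theorem sum_mult_mul_eq_Vvol {R : Box n} {U : Finset (Pt n)} (hU : R.vertices ⊆ U)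
    (C : Pt n → ℝ) : ∑ u ∈ U, (R.mult k u : ℝ) * C u = Vvol k C R := by
  rw [Vvol, ← Finset.sum_subset hU fun u _ hu => by simp [Box.mult_of_notMem hu]]
  exact Finset.sum_congr rfl fun v hv => by rw [Box.mult_of_mem hv]

theorem multDU_add (D₁ D₂ : Multiset (Box n)) (u : Pt n) :
    multDU k (D₁ + D₂) u = multDU k D₁ u + multDU k D₂ u := by
  simp [multDU]

theorem multDU_cons (R : Box n) (DU : Multiset (Box n)) (u : Pt n) :
    multDU k (R ::ₘ DU) u = R.mult k u + multDU k DU u := by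
  simp [multDU]

theorem multDU_nsmul_singleton (c : ℕ) (R : Box n) (u : Pt n) :
    multDU k (c • {R}) u = c * R.mult k u := by
  simp [multDU, Multiset.map_nsmul, Multiset.sum_nsmul]

theorem multDU_sum {ι : Type*} (s : Finset ι) (D : ι → Multiset (Box n)) (u : Pt n) :
    multDU k (∑ i ∈ s, D i) u = ∑ i ∈ s, multDU k (D i) u := by
  induction s using Finset.cons_induction with
  | empty => simp [multDU]
  | cons i s hi ih => rw [Finset.sum_cons, Finset.sum_cons, multDU_add, ih]

theorem multDU_eq_zero_of_notMem {DU : Multiset (Box n)} {u : Pt n}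
    (h : u ∉ DU.toFinset.biUnion Box.vertices) : multDU k DU u = 0 := by
  refine Multiset.sum_eq_zero fun z hz => ?_
  obtain ⟨R, hR, rfl⟩ := Multiset.mem_map.1 hz
  exact Box.mult_of_notMem fun hv =>
    h (Finset.mem_biUnion.2 ⟨R, Multiset.mem_toFinset.2 hR, hv⟩)

theorem sum_multDU_mul_eq_sum_Vvol {U : Finset (Pt n)} (C : Pt n → ℝ) :
    ∀ DU : Multiset (Box n), (∀ R ∈ DU, R.vertices ⊆ U) →
      ∑ u ∈ U, (multDU k DU u : ℝ) * C u = (DU.map (Vvol k C)).sum := by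
  refine Multiset.induction (by simp [multDU]) fun R DU ih hU => ?_
  simp only [multDU_cons, Int.cast_add, add_mul, Finset.sum_add_distrib, Multiset.map_cons,
    Multiset.sum_cons]
  rw [sum_mult_mul_eq_Vvol (hU R (Multiset.mem_cons_self R DU)),
    ih fun R' hR' => hU R' (Multiset.mem_cons_of_mem hR')]

theorem ite_pos_neg_eq_max {m a b : ℝ} (hab : a ≤ b) :
    (if 0 < m then m * b else if m < 0 then m * a else 0) = max (m * a) (m * b) := by
  rcases lt_trichotomy m 0 with hm | rfl | hm
  · rw [if_neg hm.not_gt, if_pos hm, max_eq_left (mul_le_mul_of_nonpos_left hab hm.le)]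
  · simp
  · rw [if_pos hm, max_eq_right (mul_le_mul_of_nonneg_left hab hm.le)]

theorem Lk_eq_sum_of_subset {A B : Pt n → ℝ} {DU : Multiset (Box n)} {U : Finset (Pt n)}
    (hU : DU.toFinset.biUnion Box.vertices ⊆ U) :
    Lk k A B DU = ∑ u ∈ U,
      (if 0 < multDU k DU u then (multDU k DU u : ℝ) * B u
       else if multDU k DU u < 0 then (multDU k DU u : ℝ) * A u else 0) :=
  Finset.sum_subset hU fun u _ hu => by simp [multDU_eq_zero_of_notMem hu]

theorem Lk_eq_sum_max {A B : Pt n → ℝ} {DU : Multiset (Box n)} {U : Finset (Pt n)}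
    (hU : DU.toFinset.biUnion Box.vertices ⊆ U) (hAB : ∀ u ∈ U, A u ≤ B u) :
    Lk k A B DU = ∑ u ∈ U, max (multDU k DU u * A u) (multDU k DU u * B u) := by
  rw [Lk_eq_sum_of_subset hU]
  refine Finset.sum_congr rfl fun u hu => ?_
  rw [← ite_pos_neg_eq_max (hAB u hu)]
  simp only [Int.cast_pos, Int.cast_lt_zero]

theorem Lk_update (A B : Pt n → ℝ) (DU : Multiset (Box n)) (x : Pt n) (a : ℝ) :
    Lk k (update A x a) B DU = Lk k A B DU + min (multDU k DU x : ℝ) 0 * (a - A x) := by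
  have hU := Finset.subset_insert x (DU.toFinset.biUnion Box.vertices)
  have hx : min (multDU k DU x : ℝ) 0 * (a - A x) = ∑ u ∈ insert x
      (DU.toFinset.biUnion Box.vertices), if u = x then min (multDU k DU u : ℝ) 0 * (a - A u)
      else 0 := (Finset.sum_ite_eq_of_mem' _ x (fun u => min (multDU k DU u : ℝ) 0 * (a - A u))
        (Finset.mem_insert_self _ _)).symm
  rw [Lk_eq_sum_of_subset hU, Lk_eq_sum_of_subset hU, hx, ← Finset.sum_add_distrib]
  refine Finset.sum_congr rfl fun u _ => ?_
  rcases eq_or_ne u x with rfl | hu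
  · rcases lt_trichotomy (multDU k DU u) 0 with hm | hm | hm
    · have hm' : (multDU k DU u : ℝ) < 0 := Int.cast_lt_zero.2 hm
      simp [hm, hm.not_gt, min_eq_left hm'.le]
      ring
    · simp [hm]
    · simp [hm, (Int.cast_pos.2 hm).le]
  · simp [hu]

theorem Lk_nonneg_of_kIncreasingOn {D : Set (Pt n)} {A B C : Pt n → ℝ}
    (hC : KIncreasingOn k D C) (hAC : ∀ u ∈ D, A u ≤ C u) (hCB : ∀ u ∈ D, C u ≤ B u)
    {DU : Multiset (Box n)} (hDU : memRk k D DU) : 0 ≤ Lk k A B DU := by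
  set U := DU.toFinset.biUnion Box.vertices
  have hUD : ∀ u ∈ U, u ∈ D := fun u hu => by
    obtain ⟨R, hR, hu⟩ := Finset.mem_biUnion.1 hu
    exact (hDU R (Multiset.mem_toFinset.1 hR)).2 u hu
  have hsum := sum_multDU_mul_eq_sum_Vvol (k := k) (U := U) C DU fun R hR v hv =>
    Finset.mem_biUnion.2 ⟨R, Multiset.mem_toFinset.2 hR, hv⟩
  rw [Lk_eq_sum_max subset_rfl fun u hu => (hAC u (hUD u hu)).trans (hCB u (hUD u hu))]
  calc (0 : ℝ) ≤ (DU.map (Vvol k C)).sum :=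
        Multiset.sum_nonneg fun _ hz => by
          obtain ⟨R, hR, rfl⟩ := Multiset.mem_map.1 hz
          exact hC R (hDU R hR).1 (hDU R hR).2
    _ = ∑ u ∈ U, (multDU k DU u : ℝ) * C u := hsum.symm
    _ ≤ _ := Finset.sum_le_sum fun u hu => by
      rcases le_total 0 (multDU k DU u : ℝ) with hm | hm
      · exact le_max_of_le_right (mul_le_mul_of_nonneg_left (hCB u (hUD u hu)) hm)
      · exact le_max_of_le_left (mul_le_mul_of_nonpos_left (hAC u (hUD u hu)) hm)

section Weighted

variable {ι : Type*} [Fintype ι]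

noncomputable def weightedMult (k : ℕ) (R : ι → Box n) (w : ι → ℝ) (u : Pt n) : ℝ :=
  ∑ i, w i * (R i).mult k u

/-- The real-weighted analogue of `Lk` for the formal combination `∑ i, w i • R i`. -/
noncomputable def weightedLk (k : ℕ) (A B : Pt n → ℝ) (R : ι → Box n) (w : ι → ℝ) : ℝ :=
  ∑ u ∈ Finset.univ.biUnion fun i => (R i).vertices,
    max (weightedMult k R w u * A u) (weightedMult k R w u * B u)

theorem weightedLk_natCast {A B : Pt n → ℝ} {R : ι → Box n}
    (hAB : ∀ i, ∀ v ∈ (R i).vertices, A v ≤ B v) (c : ι → ℕ) :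
    weightedLk k A B R (fun i => c i) = Lk k A B (∑ i, c i • {R i}) := by
  have hmult : ∀ u, (multDU k (∑ i, c i • {R i}) u : ℝ) = weightedMult k R (fun i => c i) u :=
    fun u => by simp [multDU_sum, multDU_nsmul_singleton, weightedMult]
  have hU : (∑ i, c i • ({R i} : Multiset (Box n))).toFinset.biUnion Box.vertices ⊆
      Finset.univ.biUnion fun i => (R i).vertices := fun v hv => by
    obtain ⟨S, hS, hv⟩ := Finset.mem_biUnion.1 hv
    obtain ⟨i, -, hi⟩ := Multiset.mem_sum.1 (Multiset.mem_toFinset.1 hS)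
    rw [(Multiset.mem_singleton.1 (Multiset.mem_of_mem_nsmul hi))] at hv
    exact Finset.mem_biUnion.2 ⟨i, Finset.mem_univ i, hv⟩
  rw [Lk_eq_sum_max hU fun v hv => by
    obtain ⟨i, -, hi⟩ := Finset.mem_biUnion.1 hv
    exact hAB i v hi]
  simp only [hmult, weightedLk]

theorem weightedLk_smul (A B : Pt n → ℝ) (R : ι → Box n) (w : ι → ℝ) {t : ℝ} (ht : 0 ≤ t) :
    weightedLk k A B R (t • w) = t * weightedLk k A B R w := by
  simp only [weightedLk, weightedMult, Pi.smul_apply, smul_eq_mul, mul_assoc,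
    ← Finset.mul_sum, ← mul_max_of_nonneg _ _ ht]

theorem continuous_weightedLk (A B : Pt n → ℝ) (R : ι → Box n) :
    Continuous (weightedLk k A B R) := by
  unfold weightedLk weightedMult
  fun_prop

theorem weightedLk_nonneg {A B : Pt n → ℝ} {R : ι → Box n}
    (hAB : ∀ i, ∀ v ∈ (R i).vertices, A v ≤ B v)
    (hL : ∀ c : ι → ℕ, 0 ≤ Lk k A B (∑ i, c i • {R i})) {w : ι → ℝ} (hw : 0 ≤ w) :
    0 ≤ weightedLk k A B R w := by
  have hlim : Tendsto (fun N : ℕ => fun i => (⌈w i * N⌉₊ : ℝ) / N) atTop (𝓝 w) :=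
    tendsto_pi_nhds.2 fun i =>
      (tendsto_nat_ceil_mul_div_atTop (hw i)).comp tendsto_natCast_atTop_atTop
  refine ge_of_tendsto ((continuous_weightedLk A B R).tendsto w |>.comp hlim)
    (Eventually.of_forall fun N => ?_)
  have hN : (fun i => (⌈w i * N⌉₊ : ℝ) / N) = (N : ℝ)⁻¹ • fun i => ((⌈w i * N⌉₊ : ℕ) : ℝ) := by
    funext i
    simp [div_eq_inv_mul]
  simp only [Function.comp_apply, hN, weightedLk_smul A B R _ (inv_nonneg.2 (Nat.cast_nonneg N)),
    weightedLk_natCast hAB]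
  exact mul_nonneg (inv_nonneg.2 (Nat.cast_nonneg N)) (hL _)

theorem sum_mul_Vvol_eq_sum_weightedMult {R : ι → Box n} {U : Finset (Pt n)}
    (hU : ∀ i, (R i).vertices ⊆ U) (w : ι → ℝ) (C : Pt n → ℝ) :
    ∑ i, w i * Vvol k C (R i) = ∑ u ∈ U, weightedMult k R w u * C u := by
  simp only [← sum_mult_mul_eq_Vvol (hU _), weightedMult, Finset.mul_sum, Finset.sum_mul]
  rw [Finset.sum_comm]
  exact Finset.sum_congr rfl fun _ _ => Finset.sum_congr rfl fun _ _ => by ring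

end Weighted

theorem memRk_sum_nsmul {ι : Type*} [Fintype ι] {D : Set (Pt n)} {R : ι → Box n}
    (hR : ∀ i, (R i).IsKBox k ∧ ∀ v ∈ (R i).vertices, v ∈ D) (c : ι → ℕ) :
    memRk k D (∑ i, c i • {R i}) := fun S hS => by
  obtain ⟨i, -, hi⟩ := Multiset.mem_sum.1 hS
  rw [Multiset.mem_singleton.1 (Multiset.mem_of_mem_nsmul hi)]
  exact hR i

noncomputable def vvolCLM (k : ℕ) (R : Box n) : (Pt n → ℝ) →L[ℝ] ℝ :=
  ∑ v ∈ R.vertices, (R.sign k v : ℝ) • ContinuousLinearMap.proj v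

theorem vvolCLM_apply (R : Box n) (C : Pt n → ℝ) : vvolCLM k R C = Vvol k C R := by
  simp [vvolCLM, Vvol]

-- the lower bound `min (A u) (B u)` keeps the intervals nonempty off `D`
theorem exists_mem_pi_forall_Vvol_nonneg {ι : Type*} [Fintype ι] {D : Set (Pt n)}
    {A B : Pt n → ℝ} (hAB : ∀ u ∈ D, A u ≤ B u) (hL : ∀ DU, memRk k D DU → 0 ≤ Lk k A B DU)
    {R : ι → Box n} (hRD : ∀ i, (R i).IsKBox k ∧ ∀ v ∈ (R i).vertices, v ∈ D) :
    ∃ C ∈ Set.univ.pi fun u => Set.Icc (min (A u) (B u)) (B u), ∀ i, 0 ≤ vvolCLM k (R i) C := by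
  have hABR : ∀ i, ∀ v ∈ (R i).vertices, A v ≤ B v := fun i v hv => hAB v ((hRD i).2 v hv)
  refine exists_mem_forall_nonneg_of_isCompact (isCompact_univ_pi fun _ => isCompact_Icc)
    (convex_pi fun _ _ => convex_Icc _ _) _ fun w hw => ?_
  -- the greedy choice `C u ∈ {A u, B u}` maximizes `∑ i, w i * Vvol k C (R i)`
  refine ⟨fun u => if 0 ≤ weightedMult k R w u then B u else min (A u) (B u),
    fun u _ => ?_, ?_⟩
  · dsimp only
    split_ifs <;> simp
  simp only [vvolCLM_apply]
  rw [sum_mul_Vvol_eq_sum_weightedMult (R := R) fun i =>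
    Finset.subset_biUnion_of_mem (fun i => (R i).vertices) (Finset.mem_univ i)]
  refine (weightedLk_nonneg hABR (fun c => hL _ (memRk_sum_nsmul hRD c)) hw).trans_eq
    (Finset.sum_congr rfl fun u hu => ?_)
  obtain ⟨i, -, hi⟩ := Finset.mem_biUnion.1 hu
  have hab := hABR i u hi
  split_ifs with hM
  · exact max_eq_right (mul_le_mul_of_nonneg_left hab hM)
  · rw [min_eq_left hab, max_eq_left (mul_le_mul_of_nonpos_left hab (not_le.1 hM).le)]

theorem exists_kIncreasingOn_between {D : Set (Pt n)} {A B : Pt n → ℝ}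
    (hAB : ∀ u ∈ D, A u ≤ B u) (hL : ∀ DU, memRk k D DU → 0 ≤ Lk k A B DU) :
    ∃ C, KIncreasingOn k D C ∧ ∀ u ∈ D, A u ≤ C u ∧ C u ≤ B u := by
  obtain ⟨C, hCK, hCF⟩ := (isCompact_univ_pi fun _ => isCompact_Icc).inter_iInter_nonempty
    (fun R : {R : Box n // R.IsKBox k ∧ ∀ v ∈ R.vertices, v ∈ D} => {C | 0 ≤ vvolCLM k R.1 C})
    (fun R => isClosed_le continuous_const (vvolCLM k R.1).continuous) fun s => by
      obtain ⟨C, hCK, hC⟩ := exists_mem_pi_forall_Vvol_nonneg hAB hL (R := fun i : s => i.1.1)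
        fun i => i.1.2
      exact ⟨C, hCK, Set.mem_iInter₂.2 fun R hR => hC ⟨R, hR⟩⟩
  refine ⟨C, fun R hR hRD => ?_, fun u hu => ?_⟩
  · simpa [vvolCLM_apply] using Set.mem_iInter.1 hCF ⟨R, hR, hRD⟩
  · simpa [min_eq_left (hAB u hu)] using hCK u (Set.mem_univ u)


/-- The box `[T.piecewise 0 u, update u i a]`: its vertices off the faces `{x j = 0}`, `j ∈ T`,
are `u` and `update u i a`, so grounded functions see only these two. -/
noncomputable def cornerBox (u : Pt n) (i : Fin n) (a : ℝ) (T : Finset (Fin n)) : Box n :=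
  ⟨T.piecewise 0 u, update u i a⟩

section CornerBox

variable {u : Pt n} {i : Fin n} {a : ℝ} {T : Finset (Fin n)}

theorem cornerBox_isKBox (hu : inCube u) (ha : a ≤ 1) (hiT : i ∉ T) (hua : u i < a)
    (hTu : ∀ j ∈ T, 0 < u j) : (cornerBox u i a T).IsKBox (T.card + 1) := by
  have hne : ∀ j ∈ T, j ≠ i := fun j hj h => hiT (h ▸ hj)
  refine ⟨fun j => ?_, fun j => ?_, fun j => ?_, ?_⟩
  · by_cases hj : j ∈ T <;> simp [cornerBox, hj, hu j]
  · rcases eq_or_ne j i with rfl | hj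
    · simpa [cornerBox] using ⟨(hu j).1.trans hua.le, ha⟩
    · simpa [cornerBox, hj] using hu j
  · by_cases hj : j ∈ T
    · simpa [cornerBox, hj, hne j hj] using (hTu j hj).le
    · rcases eq_or_ne j i with rfl | hji
      · simpa [cornerBox, hj] using hua.le
      · simp [cornerBox, hj, hji]
  · have : Finset.univ.filter (fun j => (cornerBox u i a T).lo j < (cornerBox u i a T).hi j)
        = insert i T := by
      ext j
      simp only [Finset.mem_filter, Finset.mem_univ, true_and, Finset.mem_insert]
      by_cases hj : j ∈ T
      · simp [cornerBox, hj, hne j hj, hTu j hj]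
      · rcases eq_or_ne j i with rfl | hji
        · simp [cornerBox, hj, hua]
        · simp [cornerBox, hj, hji]
    rw [this, Finset.card_insert_of_notMem hiT]

theorem self_mem_vertices_cornerBox (hiT : i ∉ T) : u ∈ (cornerBox u i a T).vertices :=
  Box.mem_vertices_iff.2 fun j => by
    by_cases hj : j ∈ T
    · have hji : j ≠ i := fun h => hiT (h ▸ hj)
      exact Or.inr (by simp [cornerBox, hji])
    · exact Or.inl (by simp [cornerBox, hj])

theorem update_mem_vertices_cornerBox : update u i a ∈ (cornerBox u i a T).vertices :=
  Box.mem_vertices_iff.2 fun _ => Or.inr rfl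

theorem sign_self_cornerBox (hiT : i ∉ T) (hTu : ∀ j ∈ T, 0 < u j) :
    (cornerBox u i a T).sign (T.card + 1) u = -1 := by
  have hT : T.card < n := by simpa using Finset.card_lt_univ_of_notMem hiT
  have : Finset.univ.filter (fun j => u j = (cornerBox u i a T).lo j) = Tᶜ := by
    ext j
    simp only [Finset.mem_filter, Finset.mem_univ, true_and, Finset.mem_compl]
    by_cases hj : j ∈ T
    · simp [cornerBox, hj, (hTu j hj).ne']
    · simp [cornerBox, hj]
  rw [Box.sign, this, Finset.card_compl, Fintype.card_fin,
    show n - T.card + (n - (T.card + 1)) = 2 * (n - (T.card + 1)) + 1 by omega, pow_succ,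
    pow_mul]
  norm_num

theorem sign_update_cornerBox (hiT : i ∉ T) (hua : u i < a) (hTu : ∀ j ∈ T, 0 < u j) :
    (cornerBox u i a T).sign (T.card + 1) (update u i a) = 1 := by
  have hT : T.card < n := by simpa using Finset.card_lt_univ_of_notMem hiT
  have : Finset.univ.filter (fun j => update u i a j = (cornerBox u i a T).lo j)
      = (insert i T)ᶜ := by
    ext j
    simp only [Finset.mem_filter, Finset.mem_univ, true_and, Finset.mem_compl,
      Finset.mem_insert]
    by_cases hj : j ∈ T
    · have hji : j ≠ i := fun h => hiT (h ▸ hj)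
      simp [cornerBox, hj, hji, (hTu j hj).ne']
    · rcases eq_or_ne j i with rfl | hji
      · simp [cornerBox, hj, hua.ne']
      · simp [cornerBox, hj, hji]
  rw [Box.sign, this, Finset.card_compl, Fintype.card_fin, Finset.card_insert_of_notMem hiT,
    show n - (T.card + 1) + (n - (T.card + 1)) = 2 * (n - (T.card + 1)) by omega, pow_mul]
  norm_num

theorem eq_or_eq_update_of_mem_vertices_cornerBox (hiT : i ∉ T) {v : Pt n}
    (hv : v ∈ (cornerBox u i a T).vertices) (hv0 : ∀ j ∈ T, v j ≠ 0) :
    v = u ∨ v = update u i a := by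
  have hv := Box.mem_vertices_iff.1 hv
  have hoff : ∀ j ≠ i, v j = u j := fun j hji => by
    by_cases hj : j ∈ T
    · simpa [cornerBox, hj, hji, hv0 j hj] using hv j
    · simpa [cornerBox, hj, hji] using hv j
  rcases hv i with h | h
  · refine Or.inl (funext fun j => ?_)
    rcases eq_or_ne j i with rfl | hji
    · simpa [cornerBox, hiT] using h
    · exact hoff j hji
  · refine Or.inr (funext fun j => ?_)
    rcases eq_or_ne j i with rfl | hji
    · simpa [cornerBox] using h
    · simpa [hji] using hoff j hji

theorem Vvol_cornerBox {C : Pt n → ℝ} (hC : Grounded C) (hu : inCube u) (ha : a ≤ 1)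
    (hiT : i ∉ T) (hua : u i < a) (hTu : ∀ j ∈ T, 0 < u j) :
    Vvol (T.card + 1) C (cornerBox u i a T) = C (update u i a) - C u := by
  have hne : u ≠ update u i a := fun h => hua.ne (by simpa using congrFun h i)
  have hsub : {u, update u i a} ⊆ (cornerBox u i a T).vertices :=
    Finset.insert_subset (self_mem_vertices_cornerBox hiT)
      (Finset.singleton_subset_iff.2 update_mem_vertices_cornerBox)
  rw [Vvol, ← Finset.sum_subset hsub fun v hv hv' => ?_, Finset.sum_pair hne,
    sign_self_cornerBox hiT hTu, sign_update_cornerBox hiT hua hTu]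
  · push_cast
    ring
  by_cases hv0 : ∀ j ∈ T, v j ≠ 0
  · rcases eq_or_eq_update_of_mem_vertices_cornerBox hiT hv hv0 with rfl | rfl <;> simp at hv'
  · push Not at hv0
    obtain ⟨j, -, hj⟩ := hv0
    rw [hC v ((cornerBox_isKBox hu ha hiT hua hTu).inCube_of_mem_vertices hv) ⟨j, hj⟩, mul_zero]

end CornerBox

theorem inCube_update {u : Pt n} (hu : inCube u) (i : Fin n) {a : ℝ} (ha : a ∈ Set.Icc (0 : ℝ) 1) :
    inCube (update u i a) := fun j => by
  rcases eq_or_ne j i with rfl | hj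
  · simpa using ha
  · simpa [hj] using hu j

theorem exists_subset_erase_card_add_one (hk : 1 ≤ k) (hkn : k ≤ n) (i : Fin n) :
    ∃ T ⊆ Finset.univ.erase i, T.card + 1 = k := by
  obtain ⟨T, hT, hcard⟩ := Finset.exists_subset_card_eq (s := Finset.univ.erase i) (n := k - 1)
    (by simp; omega)
  exact ⟨T, hT, by omega⟩

theorem le_update_of_kIncreasingOn {C : Pt n → ℝ} (hk : 1 ≤ k) (hkn : k ≤ n) (hC0 : Grounded C)
    (hC : KIncreasingOn k (cubeSet n) C) {u : Pt n} (hu : inCube u) {i : Fin n} {a : ℝ}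
    (hua : u i ≤ a) (ha : a ≤ 1) : C u ≤ C (update u i a) := by
  rcases hua.eq_or_lt with rfl | hua
  · rw [update_eq_self]
  by_cases hz : ∃ j ≠ i, u j = 0
  · obtain ⟨j, hji, hj⟩ := hz
    rw [hC0 u hu ⟨j, hj⟩,
      hC0 _ (inCube_update hu i ⟨(hu i).1.trans hua.le, ha⟩) ⟨j, by simp [hji, hj]⟩]
  push Not at hz
  obtain ⟨T, hTi, rfl⟩ := exists_subset_erase_card_add_one hk hkn i
  have hiT : i ∉ T := fun h => by simpa using hTi h
  have hTu : ∀ j ∈ T, 0 < u j := fun j hj =>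
    (hu j).1.lt_of_ne' (hz j (Finset.ne_of_mem_erase (hTi hj)))
  have hR := cornerBox_isKBox hu ha hiT hua hTu
  have := hC _ hR fun v hv => hR.inCube_of_mem_vertices hv
  rw [Vvol_cornerBox hC0 hu ha hiT hua hTu] at this
  linarith

theorem oneIncreasing_of_kIncreasingOn {C : Pt n → ℝ} (hk : 1 ≤ k) (hkn : k ≤ n)
    (hC0 : Grounded C) (hC : KIncreasingOn k (cubeSet n) C) : OneIncreasing C := by
  intro x y hx hy hxy
  have hcube : ∀ s : Finset (Fin n), inCube (s.piecewise y x) := fun s j => by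
    by_cases hj : j ∈ s <;> simp [hj, hx j, hy j]
  suffices ∀ s : Finset (Fin n), C x ≤ C (s.piecewise y x) by simpa using this Finset.univ
  intro s
  induction s using Finset.induction_on with
  | empty => simp
  | insert a s ha ih =>
    rw [Finset.piecewise_insert]
    exact ih.trans (le_update_of_kIncreasingOn hk hkn hC0 hC (hcube s) (by simp [ha, hxy a])
      (hy a).2)

theorem exists_memRk_multDU_neg (hk : 1 ≤ k) (hkn : k ≤ n) {x : Pt n} (hx : inCube x)
    (hpos : ∀ j, 0 < x j) {i : Fin n} (hi : x i < 1) :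
    ∃ DU, memRk k (cubeSet n) DU ∧ multDU k DU x < 0 := by
  obtain ⟨T, hTi, rfl⟩ := exists_subset_erase_card_add_one hk hkn i
  have hiT : i ∉ T := fun h => by simpa using hTi h
  have hR := cornerBox_isKBox hx le_rfl hiT hi fun j _ => hpos j
  refine ⟨{cornerBox x i 1 T}, fun R hR' => ?_, ?_⟩
  · rw [Multiset.mem_singleton.1 hR']
    exact ⟨hR, fun v hv => hR.inCube_of_mem_vertices hv⟩
  · rw [multDU, Multiset.map_singleton, Multiset.sum_singleton,
      Box.mult_of_mem (self_mem_vertices_cornerBox hiT), sign_self_cornerBox hiT fun j _ => hpos j]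
    norm_num

theorem exists_memRk_multDU_neg_of_lt {A B : Pt n → ℝ} (hk : 1 ≤ k) (hkn : k ≤ n)
    (hA1 : A (fun _ => 1) = 1) (hB : Standardized B) {x : Pt n} (hx : inCube x)
    (hA0 : 0 ≤ A x) (hlt : A x < B x) : ∃ DU, memRk k (cubeSet n) DU ∧ multDU k DU x < 0 := by
  have hpos : ∀ j, 0 < x j := fun j =>
    (hx j).1.lt_of_ne' fun h => by linarith [hB.1 x hx ⟨j, h⟩]
  obtain ⟨i, hi⟩ : ∃ i, x i < 1 := by
    by_contra! h
    have : x = fun _ => 1 := funext fun j => le_antisymm (hx j).2 (h j)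
    rw [this, hA1, hB.2.2] at hlt
    exact hlt.false
  exact exists_memRk_multDU_neg hk hkn hx hpos hi

theorem sub_le_Lk_div_of_kIncreasingOn {D : Set (Pt n)} {A B C : Pt n → ℝ}
    (hC : KIncreasingOn k D C) (hAC : ∀ u ∈ D, A u ≤ C u) (hCB : ∀ u ∈ D, C u ≤ B u)
    {DU : Multiset (Box n)} (hDU : memRk k D DU) {x : Pt n} (hx : multDU k DU x < 0) :
    C x - A x ≤ Lk k A B DU / |(multDU k DU x : ℝ)| := by
  have hx' : (multDU k DU x : ℝ) < 0 := Int.cast_lt_zero.2 hx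
  have h := Lk_nonneg_of_kIncreasingOn (A := update A x (C x)) hC (fun u hu => by
    rcases eq_or_ne u x with rfl | hux
    · simp
    · simpa [hux] using hAC u hu) hCB hDU
  rw [Lk_update, min_eq_left hx'.le] at h
  rw [le_div_iff₀ (abs_pos.2 hx'.ne), abs_of_neg hx']
  linear_combination h

theorem Lk_update_nonneg_of_le_Pneg {D : Set (Pt n)} {A B : Pt n → ℝ}
    (hL : ∀ DU, memRk k D DU → 0 ≤ Lk k A B DU) {x : Pt n} (hP : B x - A x ≤ Pneg k D A B x)
    {DU : Multiset (Box n)} (hDU : memRk k D DU) : 0 ≤ Lk k (update A x (B x)) B DU := by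
  rw [Lk_update]
  rcases le_or_gt 0 (multDU k DU x) with hm | hm
  · simpa [min_eq_right (Int.cast_nonneg hm)] using hL DU hDU
  have hm' : (multDU k DU x : ℝ) < 0 := Int.cast_lt_zero.2 hm
  have h : Pneg k D A B x ≤ Lk k A B DU / |(multDU k DU x : ℝ)| :=
    csInf_le ⟨0, fun _ ⟨D', hD', _, h⟩ => h ▸ div_nonneg (hL D' hD') (abs_nonneg _)⟩
      ⟨DU, hDU, hm, rfl⟩
  rw [le_div_iff₀ (abs_pos.2 hm'.ne), abs_of_neg hm'] at h
  rw [min_eq_left hm'.le]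
  nlinarith

theorem standardized_of_kIncreasingOn {A B C : Pt n → ℝ} (hk : 1 ≤ k) (hkn : k ≤ n)
    (hA1 : A (fun _ => 1) = 1) (hB : Standardized B) (hAI : MapsToI A) (hBI : MapsToI B)
    (hC : KIncreasingOn k (cubeSet n) C) (hAC : ∀ u, inCube u → A u ≤ C u ∧ C u ≤ B u) :
    MapsToI C ∧ Standardized C := by
  have hC0 : Grounded C := fun w hw hz => le_antisymm
    ((hAC w hw).2.trans (hB.1 w hw hz).le) ((hAI w hw).1.trans (hAC w hw).1)
  have h1 := hAC (fun _ => 1) fun _ => ⟨zero_le_one, le_rfl⟩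
  refine ⟨fun u hu => ⟨(hAI u hu).1.trans (hAC u hu).1, (hAC u hu).2.trans (hBI u hu).2⟩,
    hC0, oneIncreasing_of_kIncreasingOn hk hkn hC0 hC, ?_⟩
  rw [hA1, hB.2.2] at h1
  exact le_antisymm h1.2 h1.1

theorem exists_standardized_kIncreasingOn_eq_of_le_Pneg {A B : Pt n → ℝ} (hk : 1 ≤ k)
    (hkn : k ≤ n) (hA1 : A (fun _ => 1) = 1) (hB : Standardized B) (hAI : MapsToI A)
    (hBI : MapsToI B) (hAB : ∀ u, inCube u → A u ≤ B u)
    (hL : ∀ DU, memRk k (cubeSet n) DU → 0 ≤ Lk k A B DU) {x : Pt n} (hx : inCube x)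
    (hP : B x - A x ≤ Pneg k (cubeSet n) A B x) :
    ∃ C, MapsToI C ∧ Standardized C ∧ KIncreasingOn k (cubeSet n) C ∧
      (∀ u, inCube u → A u ≤ C u ∧ C u ≤ B u) ∧ C x = B x := by
  obtain ⟨C, hC, hAC⟩ := exists_kIncreasingOn_between (D := cubeSet n) (A := update A x (B x))
    (fun u hu => by
      rcases eq_or_ne u x with rfl | hux
      · simp
      · simpa [hux] using hAB u hu)
    fun DU hDU => Lk_update_nonneg_of_le_Pneg hL hP hDU
  have hCx : C x = B x := le_antisymm (hAC x hx).2 (by simpa using (hAC x hx).1)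
  have hAC' : ∀ u, inCube u → A u ≤ C u ∧ C u ≤ B u := fun u hu => by
    rcases eq_or_ne u x with rfl | hux
    · exact ⟨hCx ▸ hAB u hu, (hAC u hu).2⟩
    · simpa [hux] using hAC u hu
  obtain ⟨hCI, hCS⟩ := standardized_of_kIncreasingOn hk hkn hA1 hB hAI hBI hC hAC'
  exact ⟨C, hCI, hCS, hC, hAC', hCx⟩

end KIncr

open KIncr

theorem stmt17_general (n k : ℕ) (hk1 : 1 ≤ k) (hkn : k ≤ n)
    (A B : Pt n → ℝ) (hA : Standardized A) (hB : Standardized B)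
    (hAI : MapsToI A) (hBI : MapsToI B)
    (hAB : ∀ x : Pt n, inCube x → A x ≤ B x)
    (hL : ∀ DU : Multiset (Box n), memRk k (cubeSet n) DU → 0 ≤ Lk k A B DU) :
    (∀ x : Pt n, inCube x → B x - A x ≤ Pneg k (cubeSet n) A B x) ↔
    (∀ x : Pt n, inCube x →
      B x = sSup {y : ℝ | ∃ C : Pt n → ℝ, MapsToI C ∧ Standardized C ∧
        KIncreasingOn k (cubeSet n) C ∧
        (∀ u : Pt n, inCube u → A u ≤ C u ∧ C u ≤ B u) ∧ y = C x}) := by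
  constructor
  · intro hP x hx
    obtain ⟨C, hCI, hCS, hC, hAC, hCx⟩ :=
      exists_standardized_kIncreasingOn_eq_of_le_Pneg hk1 hkn hA.2.2 hB hAI hBI hAB hL hx (hP x hx)
    refine ((?_ : IsGreatest _ (B x)).csSup_eq).symm
    refine ⟨⟨C, hCI, hCS, hC, hAC, hCx.symm⟩, ?_⟩
    rintro _ ⟨C', -, -, -, hC', rfl⟩
    exact (hC' x hx).2
  · intro hsup x hx
    have hLdiv : ∀ DU, memRk k (cubeSet n) DU → 0 ≤ Lk k A B DU / |(multDU k DU x : ℝ)| :=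
      fun DU hDU => div_nonneg (hL DU hDU) (abs_nonneg _)
    rcases le_or_gt (B x) (A x) with hle | hlt
    · exact (sub_nonpos.2 hle).trans (Real.sInf_nonneg fun _ ⟨DU, hDU, _, h⟩ => h ▸ hLdiv DU hDU)
    obtain ⟨DU₀, hDU₀, hm₀⟩ :=
      exists_memRk_multDU_neg_of_lt hk1 hkn hA.2.2 hB hx (hAI x hx).1 hlt
    refine le_csInf ⟨_, DU₀, hDU₀, hm₀, rfl⟩ ?_
    rintro _ ⟨DU, hDU, hm, rfl⟩
    rw [sub_le_iff_le_add', hsup x hx]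
    refine Real.sSup_le ?_ (add_nonneg (hAI x hx).1 (hLdiv DU hDU))
    rintro _ ⟨C, -, -, hC, hAC, rfl⟩
    exact sub_le_iff_le_add'.1 (sub_le_Lk_div_of_kIncreasingOn hC (fun u hu => (hAC u hu).1)
      (fun u hu => (hAC u hu).2) hDU hm)

/-- Theorem 8.1: coherence at the upper bound for standardized
functions. -/
theorem stmt17 (n k : ℕ) (hn : 1 ≤ n) (hk1 : 1 ≤ k) (hkn : k ≤ n)
    (A B : Pt n → ℝ) (hA : Standardized A) (hB : Standardized B)
    (hAI : MapsToI A) (hBI : MapsToI B)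
    (hAB : ∀ x : Pt n, inCube x → A x ≤ B x)
    (S : Set ℝ) (hS : S.Countable) (hSsub : S ⊆ Set.Icc (0:ℝ) 1)
    (hCondS : CondS A S ∨ CondS B S)
    (hL : ∀ DU : Multiset (Box n), memRk k (cubeSet n) DU → 0 ≤ Lk k A B DU) :
    (∀ x : Pt n, inCube x → B x - A x ≤ Pneg k (cubeSet n) A B x) ↔
    (∀ x : Pt n, inCube x →
      B x = sSup {y : ℝ | ∃ C : Pt n → ℝ, MapsToI C ∧ Standardized C ∧
        KIncreasingOn k (cubeSet n) C ∧
        (∀ u : Pt n, inCube u → A u ≤ C u ∧ C u ≤ B u) ∧ y = C x}) :=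
  stmt17_general n k hk1 hkn A B hA hB hAI hBI hAB hL
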